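/- arXiv:1204.4921 — 2 statements merged into one kernel-verified Lean document; each statement's English description precedes it below -/
import Mathlib

section
/- Let f(x) = -ln(cos x), let b₁ < b₂ with b₂ - b₁ < π, and let c₁, c₂ ∈ ℝ. Then there exists exactly one x in the common domain (b₂ - π/2, b₁ + π/2) with f(x - b₁) + c₁ = f(x - b₂) + c₂; i.e., two translated grim reaper curves with overlapping (but distinct) vertical asymptote strips intersect in exactly one point. -/
/-!
Put `y = x - b₁` and `d = b₂ - b₁ ∈ (0, π)`. Since
`cos (y - d) / cos y = cos d + sin d * tan y`, the two curves meet exactly where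
`tan y = (exp (c₂ - c₁) - cos d) / sin d`. This has the single solution
`y = arctan ((exp (c₂ - c₁) - cos d) / sin d)` in `(-π/2, π/2)`, and that solution lies in the
common domain `(d - π/2, π/2)` because `exp (c₂ - c₁) > 0`.
-/

open Real Set

lemma cos_sub_div_cos (y d : ℝ) (hy : cos y ≠ 0) :
    cos (y - d) / cos y = cos d + sin d * tan y := by
  rw [cos_sub, tan_eq_sin_div_cos]
  field_simp

lemma log_cos_sub_sub_log_cos_eq_iff {y d c : ℝ} (hy : 0 < cos y) (hyd : 0 < cos (y - d))
    (hd : 0 < sin d) : log (cos (y - d)) - log (cos y) = c ↔ tan y = (exp c - cos d) / sin d := by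
  have hratio : 0 < cos (y - d) / cos y := div_pos hyd hy
  rw [← log_div hyd.ne' hy.ne', eq_div_iff hd.ne']
  constructor
  · rintro rfl
    rw [exp_log hratio, cos_sub_div_cos y d hy.ne']
    ring
  · intro h
    rw [cos_sub_div_cos y d hy.ne', show cos d + sin d * tan y = exp c by linarith, log_exp]

lemma sub_pi_div_two_lt_arctan {d t : ℝ} (hd₀ : 0 < d) (hdπ : d < π)
    (ht : 0 < cos d + sin d * t) : d - π / 2 < arctan t := by
  have hsin := sin_pos_of_pos_of_lt_pi hd₀ hdπ
  calc d - π / 2 = arctan (tan (d - π / 2)) := (arctan_tan (by linarith) (by linarith)).symm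
    _ < arctan t := by
      apply arctan_strictMono
      rw [tan_eq_sin_div_cos, sin_sub_pi_div_two, cos_sub_pi_div_two, div_lt_iff₀ hsin]
      linarith

lemma existsUnique_log_cos_sub_sub_log_cos_eq {d : ℝ} (hd₀ : 0 < d) (hdπ : d < π) (c : ℝ) :
    ∃! y, y ∈ Ioo (d - π / 2) (π / 2) ∧ log (cos (y - d)) - log (cos y) = c := by
  have hsin := sin_pos_of_pos_of_lt_pi hd₀ hdπ
  have hcos : ∀ y ∈ Ioo (d - π / 2) (π / 2), 0 < cos y ∧ 0 < cos (y - d) := fun y hy =>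
    ⟨cos_pos_of_mem_Ioo ⟨by linarith [hy.1], hy.2⟩,
      cos_pos_of_mem_Ioo ⟨by linarith [hy.1], by linarith [hy.2]⟩⟩
  have hsolve : ∀ y ∈ Ioo (d - π / 2) (π / 2),
      log (cos (y - d)) - log (cos y) = c ↔ tan y = (exp c - cos d) / sin d := fun y hy =>
    log_cos_sub_sub_log_cos_eq_iff (hcos y hy).1 (hcos y hy).2 hsin
  set t := (exp c - cos d) / sin d
  have hpos : 0 < cos d + sin d * t := by
    rw [mul_div_cancel₀ _ hsin.ne', add_sub_cancel]
    exact exp_pos c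
  have hmem : arctan t ∈ Ioo (d - π / 2) (π / 2) :=
    ⟨sub_pi_div_two_lt_arctan hd₀ hdπ hpos, arctan_lt_pi_div_two t⟩
  refine ⟨arctan t, ⟨hmem, (hsolve _ hmem).2 (tan_arctan t)⟩, ?_⟩
  rintro y ⟨hy, hyc⟩
  have htan : tan y = tan (arctan t) := by rw [tan_arctan, (hsolve y hy).1 hyc]
  exact injOn_tan ⟨by linarith [hy.1], hy.2⟩ (arctan_mem_Ioo t) htan

theorem grim_reapers_intersect_exactly_once (b₁ b₂ c₁ c₂ : ℝ) (h : b₁ < b₂)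
    (hπ : b₂ - b₁ < π) :
    ∃! x : ℝ, x ∈ Ioo (b₂ - π/2) (b₁ + π/2) ∧
      -Real.log (Real.cos (x - b₁)) + c₁ = -Real.log (Real.cos (x - b₂)) + c₂ := by
  obtain ⟨y, ⟨hy, hyc⟩, huniq⟩ :=
    existsUnique_log_cos_sub_sub_log_cos_eq (sub_pos.2 h) hπ (c₂ - c₁)
  have hshift : ∀ x, x - b₂ = x - b₁ - (b₂ - b₁) := fun x => by ring
  refine ⟨y + b₁, ⟨⟨by linarith [hy.1], by linarith [hy.2]⟩, ?_⟩, ?_⟩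
  · rw [hshift, add_sub_cancel_right]
    linarith
  · rintro x ⟨hx, hxc⟩
    have hx' : x - b₁ ∈ Ioo (b₂ - b₁ - π / 2) (π / 2) :=
      ⟨by linarith [hx.1], by linarith [hx.2]⟩
    have := huniq (x - b₁) ⟨hx', by rw [← hshift]; linarith⟩
    linarith
end

section
/- Let f(x) = -ln(cos x) on (-π/2, π/2), let a = (a_x, a_y) ∈ ℝ² with a_x > 0, and for j ∈ ℤ let Γ_j denote the graph of x ↦ f(x - j·a_x) + j·a_y over (j·a_x - π/2, j·a_x + π/2). Suppose 0 < a_x < π/2 and a_x ≠ π/q for all positive integers q. Then for all integers i, j with 0 < i < j, the triple intersection Γ₀ ∩ Γ_i ∩ Γ_j is empty. -/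
/-!
Three points `p`, `p - i a`, `p - j a` of the plane are collinear. If `p` lies on `Γ₀ ∩ Γ_i ∩ Γ_j`,
translating back by `0`, `i a`, `j a` puts these three points on the single graph `Γ₀` of the
strictly convex function `-log ∘ cos`, which is impossible.
-/

open Real Set

lemma hasDerivAt_neg_log_cos {x : ℝ} (hx : x ∈ Ioo (-(π / 2)) (π / 2)) :
    HasDerivAt (fun t => -log (cos t)) (tan x) x := by
  have hcos : cos x ≠ 0 := (cos_pos_of_mem_Ioo hx).ne'
  refine ((hasDerivAt_log hcos).comp x (hasDerivAt_cos x)).neg.congr_deriv ?_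
  rw [tan_eq_sin_div_cos]
  field_simp

lemma strictConvexOn_neg_log_cos :
    StrictConvexOn ℝ (Ioo (-(π / 2)) (π / 2)) (fun t => -log (cos t)) := by
  refine StrictMonoOn.strictConvexOn_of_deriv (convex_Ioo _ _) ?_ ?_
  · exact (continuous_cos.continuousOn.log fun x hx => (cos_pos_of_mem_Ioo hx).ne').neg
  · rw [interior_Ioo]
    exact strictMonoOn_tan.congr fun x hx => (hasDerivAt_neg_log_cos hx).deriv.symm

lemma StrictConvexOn.false_of_three_translates {s : Set ℝ} {f : ℝ → ℝ} (hf : StrictConvexOn ℝ s f)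
    {a b i j x y : ℝ} (ha : 0 < a) (hi : 0 < i) (hij : i < j) (hx : x ∈ s) (hxj : x - j * a ∈ s)
    (h₀ : f x = y) (hᵢ : f (x - i * a) = y - i * b) (hⱼ : f (x - j * a) = y - j * b) : False := by
  have hslope := hf.slope_strict_mono_adjacent hxj hx
    (by nlinarith : x - j * a < x - i * a) (by nlinarith : x - i * a < x)
  rw [h₀, hᵢ, hⱼ,
    show y - i * b - (y - j * b) = (j - i) * b by ring,
    show x - i * a - (x - j * a) = (j - i) * a by ring,
    show y - (y - i * b) = i * b by ring, show x - (x - i * a) = i * a by ring,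
    mul_div_mul_left _ _ (sub_ne_zero.2 hij.ne'), mul_div_mul_left _ _ hi.ne'] at hslope
  exact lt_irrefl _ hslope

theorem no_triple_intersection_general (ax ay : ℝ) (hax₀ : 0 < ax) (i j : ℤ) (hi : 0 < i) (hij : i < j) :
    ({p : ℝ × ℝ | p.1 ∈ Ioo ((0 : ℝ) * ax - π/2) ((0 : ℝ) * ax + π/2) ∧
        p.2 = -Real.log (Real.cos (p.1 - (0 : ℝ) * ax)) + (0 : ℝ) * ay} ∩
     {p : ℝ × ℝ | p.1 ∈ Ioo ((i : ℝ) * ax - π/2) ((i : ℝ) * ax + π/2) ∧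
        p.2 = -Real.log (Real.cos (p.1 - (i : ℝ) * ax)) + (i : ℝ) * ay} ∩
     {p : ℝ × ℝ | p.1 ∈ Ioo ((j : ℝ) * ax - π/2) ((j : ℝ) * ax + π/2) ∧
        p.2 = -Real.log (Real.cos (p.1 - (j : ℝ) * ax)) + (j : ℝ) * ay}) = ∅ := by
  refine eq_empty_of_forall_notMem ?_
  rintro p ⟨⟨⟨⟨h0l, h0r⟩, h₀⟩, -, hᵢ⟩, ⟨hjl, hjr⟩, hⱼ⟩
  rw [zero_mul, sub_zero, zero_mul, add_zero] at h₀
  refine strictConvexOn_neg_log_cos.false_of_three_translates (x := p.1) (y := p.2) (b := ay) hax₀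
    (Int.cast_pos.2 hi) (Int.cast_lt.2 hij) ⟨by linarith, by linarith⟩ ⟨by linarith, by linarith⟩
    ?_ ?_ ?_ <;> linarith

theorem no_triple_intersection (ax ay : ℝ) (hax₀ : 0 < ax) (hax₁ : ax < π / 2)
    (hq : ∀ q : ℕ, 0 < q → ax ≠ π / q) (i j : ℤ) (hi : 0 < i) (hij : i < j) :
    ({p : ℝ × ℝ | p.1 ∈ Ioo ((0 : ℝ) * ax - π/2) ((0 : ℝ) * ax + π/2) ∧
        p.2 = -Real.log (Real.cos (p.1 - (0 : ℝ) * ax)) + (0 : ℝ) * ay} ∩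
     {p : ℝ × ℝ | p.1 ∈ Ioo ((i : ℝ) * ax - π/2) ((i : ℝ) * ax + π/2) ∧
        p.2 = -Real.log (Real.cos (p.1 - (i : ℝ) * ax)) + (i : ℝ) * ay} ∩
     {p : ℝ × ℝ | p.1 ∈ Ioo ((j : ℝ) * ax - π/2) ((j : ℝ) * ax + π/2) ∧
        p.2 = -Real.log (Real.cos (p.1 - (j : ℝ) * ax)) + (j : ℝ) * ay}) = ∅ :=
  no_triple_intersection_general ax ay hax₀ i j hi hij
end
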